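/- arXiv:1603.05033 — 2 statements merged into one kernel-verified Lean document; each statement's English description precedes it below -/
import Mathlib

section
/- Let a < b be real numbers and s ∈ (0,1). Then for every u ∈ L^∞(a,b) the integral defining I_{a+}^s[u](x) converges absolutely for every x ∈ [a,b], and there exists a constant C > 0, depending only on s, such that |I_{a+}^s[u](x) − I_{a+}^s[u](y)| ≤ C ‖u‖_{L^∞(a,b)} |x−y|^{s} for all x, y ∈ [a,b]; in particular I_{a+}^s[u] is Hölder continuous of exponent s on [a,b]. -/
/-
For `a ≤ y ≤ x`, `Γ(s) (I^s[u](x) - I^s[u](y))` splits as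
`∫_a^y u(t) ((x-t)^(s-1) - (y-t)^(s-1)) dt + ∫_y^x u(t) (x-t)^(s-1) dt`.
As `s - 1 < 0`, `r ↦ r^(s-1)` is decreasing, so both kernels have constant sign and integrate
explicitly; with `|u| ≤ ‖u‖_∞` each term is at most `‖u‖_∞ (x-y)^s / s`, the first
because `(y-a)^s ≤ (x-a)^s`.
-/

open MeasureTheory Set Filter ENNReal

/-- The left Riemann–Liouville fractional integral of order `σ` with base point `a`. -/
noncomputable def RLint (a σ : ℝ) (u : ℝ → ℝ) (x : ℝ) : ℝ :=
  (Real.Gamma σ)⁻¹ * ∫ t in a..x, u t * (x - t) ^ (σ - 1)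

lemma intervalIntegrable_sub_rpow {r : ℝ} (hr : -1 < r) (x c d : ℝ) :
    IntervalIntegrable (fun t => (x - t) ^ r) volume c d := by
  simpa using
    ((intervalIntegral.intervalIntegrable_rpow' (a := x - d) (b := x - c) hr).comp_sub_left x).symm

lemma integral_sub_rpow_sub_one {s : ℝ} (hs : 0 < s) (x c d : ℝ) :
    ∫ t in c..d, (x - t) ^ (s - 1) = ((x - c) ^ s - (x - d) ^ s) / s := by
  rw [intervalIntegral.integral_comp_sub_left (fun t => t ^ (s - 1)) x,
    integral_rpow (Or.inl (by linarith))]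
  norm_num

section BoundedWeight

variable {u k : ℝ → ℝ} {c d M : ℝ}

lemma intervalIntegrable_mul_of_ae_abs_le (hcd : c ≤ d)
    (hum : AEStronglyMeasurable u (volume.restrict (Ioo c d)))
    (hu : ∀ᵐ t ∂volume.restrict (Ioo c d), |u t| ≤ M) (hk : IntervalIntegrable k volume c d) :
    IntervalIntegrable (fun t => u t * k t) volume c d := by
  rw [intervalIntegrable_iff_integrableOn_Ioo_of_le hcd] at hk ⊢
  exact hk.bdd_mul hum hu

lemma abs_intervalIntegral_mul_le (hcd : c ≤ d)
    (hu : ∀ᵐ t ∂volume.restrict (Ioo c d), |u t| ≤ M) (hk0 : ∀ t ∈ Ioo c d, 0 ≤ k t)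
    (hk : IntervalIntegrable k volume c d) :
    |∫ t in c..d, u t * k t| ≤ M * ∫ t in c..d, k t := by
  rw [intervalIntegrable_iff_integrableOn_Ioo_of_le hcd] at hk
  simp only [← Real.norm_eq_abs, intervalIntegral.integral_of_le hcd,
    integral_Ioc_eq_integral_Ioo, ← integral_const_mul M]
  refine norm_integral_le_of_norm_le (hk.const_mul M) ?_
  filter_upwards [hu, self_mem_ae_restrict measurableSet_Ioo] with t hut ht
  rw [Real.norm_eq_abs, abs_mul, abs_of_nonneg (hk0 t ht)]
  exact mul_le_mul_of_nonneg_right hut (hk0 t ht)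

end BoundedWeight

section HolderEstimate

variable {u : ℝ → ℝ} {a b x y s M : ℝ}

lemma abs_integral_mul_sub_rpow_le (hs : 0 < s) (hyx : y ≤ x)
    (hu : ∀ᵐ t ∂volume.restrict (Ioo y x), |u t| ≤ M) :
    |∫ t in y..x, u t * (x - t) ^ (s - 1)| ≤ M * (x - y) ^ s / s := by
  calc |∫ t in y..x, u t * (x - t) ^ (s - 1)|
      ≤ M * ∫ t in y..x, (x - t) ^ (s - 1) :=
        abs_intervalIntegral_mul_le hyx hu
          (fun t ht => Real.rpow_nonneg (by linarith [ht.2]) _)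
          (intervalIntegrable_sub_rpow (by linarith) x y x)
    _ = M * (x - y) ^ s / s := by
        rw [integral_sub_rpow_sub_one hs, sub_self, Real.zero_rpow hs.ne', sub_zero, mul_div_assoc]

lemma abs_integral_mul_rpow_sub_rpow_le (hs : s ∈ Ioo 0 1) (hM : 0 ≤ M) (hay : a ≤ y)
    (hyx : y ≤ x) (hu : ∀ᵐ t ∂volume.restrict (Ioo a y), |u t| ≤ M) :
    |∫ t in a..y, u t * ((x - t) ^ (s - 1) - (y - t) ^ (s - 1))| ≤ M * (x - y) ^ s / s := by
  have hr : -1 < s - 1 := by linarith [hs.1]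
  have hflip : ∫ t in a..y, u t * ((x - t) ^ (s - 1) - (y - t) ^ (s - 1)) =
      -∫ t in a..y, u t * ((y - t) ^ (s - 1) - (x - t) ^ (s - 1)) := by
    rw [← intervalIntegral.integral_neg]
    congr 1 with t
    ring
  have hk0 : ∀ t ∈ Ioo a y, 0 ≤ (y - t) ^ (s - 1) - (x - t) ^ (s - 1) := fun t ht =>
    sub_nonneg.2 (Real.rpow_le_rpow_of_nonpos (by linarith [ht.2]) (by linarith)
      (by linarith [hs.2]))
  have hmono : (y - a) ^ s ≤ (x - a) ^ s := Real.rpow_le_rpow (by linarith) (by linarith) hs.1.le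
  calc |∫ t in a..y, u t * ((x - t) ^ (s - 1) - (y - t) ^ (s - 1))|
      ≤ M * ∫ t in a..y, ((y - t) ^ (s - 1) - (x - t) ^ (s - 1)) := by
        rw [hflip, abs_neg]
        exact abs_intervalIntegral_mul_le hay hu hk0
          ((intervalIntegrable_sub_rpow hr y a y).sub (intervalIntegrable_sub_rpow hr x a y))
    _ = M * (((y - a) ^ s - (x - a) ^ s + (x - y) ^ s) / s) := by
        rw [intervalIntegral.integral_sub (intervalIntegrable_sub_rpow hr y a y)
          (intervalIntegrable_sub_rpow hr x a y), integral_sub_rpow_sub_one hs.1,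
          integral_sub_rpow_sub_one hs.1, sub_self, Real.zero_rpow hs.1.ne']
        ring
    _ ≤ M * (x - y) ^ s / s := by
        rw [mul_div_assoc]
        exact mul_le_mul_of_nonneg_left (div_le_div_of_nonneg_right (by linarith) hs.1.le) hM

lemma intervalIntegrable_mul_sub_rpow (hs : 0 < s) (hax : a ≤ x)
    (hum : AEStronglyMeasurable u (volume.restrict (Ioo a x)))
    (hu : ∀ᵐ t ∂volume.restrict (Ioo a x), |u t| ≤ M) :
    IntervalIntegrable (fun t => u t * (x - t) ^ (s - 1)) volume a x :=
  intervalIntegrable_mul_of_ae_abs_le hax hum hu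
    (intervalIntegrable_sub_rpow (by linarith) x a x)

lemma abs_integral_mul_sub_rpow_sub_le (hs : s ∈ Ioo 0 1)
    (hM : 0 ≤ M) (hay : a ≤ y) (hyx : y ≤ x)
    (hum : AEStronglyMeasurable u (volume.restrict (Ioo a x)))
    (hu : ∀ᵐ t ∂volume.restrict (Ioo a x), |u t| ≤ M) :
    |(∫ t in a..x, u t * (x - t) ^ (s - 1)) - ∫ t in a..y, u t * (y - t) ^ (s - 1)| ≤
      2 * M * (x - y) ^ s / s := by
  have hux := intervalIntegrable_mul_sub_rpow hs.1 (hay.trans hyx) hum hu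
  have huy := intervalIntegrable_mul_sub_rpow hs.1 hay
    (hum.mono_set (Ioo_subset_Ioo_right hyx))
    (ae_restrict_of_ae_restrict_of_subset (Ioo_subset_Ioo_right hyx) hu)
  have hsplit : (∫ t in a..x, u t * (x - t) ^ (s - 1)) - ∫ t in a..y, u t * (y - t) ^ (s - 1) =
      (∫ t in a..y, u t * ((x - t) ^ (s - 1) - (y - t) ^ (s - 1))) +
        ∫ t in y..x, u t * (x - t) ^ (s - 1) := by
    have hxay := hux.mono_set (uIcc_subset_uIcc left_mem_uIcc (mem_uIcc_of_le hay hyx))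
    have hxyx := hux.mono_set (uIcc_subset_uIcc (mem_uIcc_of_le hay hyx) right_mem_uIcc)
    simp only [mul_sub]
    rw [← intervalIntegral.integral_add_adjacent_intervals hxay hxyx,
      intervalIntegral.integral_sub hxay huy]
    ring
  rw [hsplit]
  calc _ ≤ M * (x - y) ^ s / s + M * (x - y) ^ s / s :=
        (abs_add_le _ _).trans (add_le_add
          (abs_integral_mul_rpow_sub_rpow_le hs hM hay hyx
            (ae_restrict_of_ae_restrict_of_subset (Ioo_subset_Ioo_right hyx) hu))
          (abs_integral_mul_sub_rpow_le hs.1 hyx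
            (ae_restrict_of_ae_restrict_of_subset (Ioo_subset_Ioo_left hay) hu)))
    _ = 2 * M * (x - y) ^ s / s := by ring

lemma abs_RLint_sub_RLint_le (hs : s ∈ Ioo 0 1) (hM : 0 ≤ M)
    (hum : AEStronglyMeasurable u (volume.restrict (Ioo a b)))
    (hu : ∀ᵐ t ∂volume.restrict (Ioo a b), |u t| ≤ M) (hx : x ∈ Icc a b) (hy : y ∈ Icc a b) :
    |RLint a s u x - RLint a s u y| ≤ 2 / (s * Real.Gamma s) * M * |x - y| ^ s := by
  wlog hyx : y ≤ x generalizing x y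
  · rw [abs_sub_comm, abs_sub_comm x]
    exact this hy hx (le_of_not_ge hyx)
  have hsub : Ioo a x ⊆ Ioo a b := Ioo_subset_Ioo_right hx.2
  have hΓ : 0 < Real.Gamma s := Real.Gamma_pos_of_pos hs.1
  calc |RLint a s u x - RLint a s u y|
      = (Real.Gamma s)⁻¹ * |(∫ t in a..x, u t * (x - t) ^ (s - 1)) -
          ∫ t in a..y, u t * (y - t) ^ (s - 1)| := by
        rw [RLint, RLint, ← mul_sub, abs_mul, abs_of_pos (inv_pos.2 hΓ)]
    _ ≤ (Real.Gamma s)⁻¹ * (2 * M * (x - y) ^ s / s) := by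
        gcongr
        exact abs_integral_mul_sub_rpow_sub_le hs hM hy.1 hyx (hum.mono_set hsub)
          (ae_restrict_of_ae_restrict_of_subset hsub hu)
    _ = 2 / (s * Real.Gamma s) * M * |x - y| ^ s := by
        rw [abs_of_nonneg (sub_nonneg.2 hyx)]
        field_simp

end HolderEstimate

/-- the fractional integral maps `L^∞(a,b)` into the Hölder class of
exponent `s`, with a constant depending only on `s`. -/
theorem rl_fracint_holder_of_Linfty (s : ℝ) (hs : s ∈ Set.Ioo (0:ℝ) 1) :
    ∃ C > (0:ℝ), ∀ a b : ℝ, a < b → ∀ u : ℝ → ℝ,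
      MemLp u ⊤ (volume.restrict (Set.Ioo a b)) →
        (∀ x ∈ Set.Icc a b,
          IntervalIntegrable (fun t => u t * (x - t) ^ (s - 1)) volume a x) ∧
        (∀ x ∈ Set.Icc a b, ∀ y ∈ Set.Icc a b,
          |RLint a s u x - RLint a s u y| ≤
            C * (eLpNorm u ⊤ (volume.restrict (Set.Ioo a b))).toReal * |x - y| ^ s) := by
  refine ⟨2 / (s * Real.Gamma s), by have := hs.1; positivity, fun a b _ u hu => ?_⟩
  have hbound : ∀ᵐ t ∂volume.restrict (Ioo a b),
      |u t| ≤ (eLpNorm u ⊤ (volume.restrict (Ioo a b))).toReal := by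
    rw [toReal_eLpNorm hu.1]
    exact ae_le_lpNorm_exponent_top hu
  refine ⟨fun x hx => ?_, fun x hx y hy =>
    abs_RLint_sub_RLint_le hs toReal_nonneg hu.1 hbound hx hy⟩
  have hsub : Ioo a x ⊆ Ioo a b := Ioo_subset_Ioo_right hx.2
  exact intervalIntegrable_mul_sub_rpow hs.1 hx.1 (hu.1.mono_set hsub)
    (ae_restrict_of_ae_restrict_of_subset hsub hbound)
end

section
/- Let a < b be real numbers, s ∈ (0,1) and f ∈ L^1(a,b). Then the following are equivalent: (i) there exists u ∈ L^1(a,b) such that f(x) = I_{a+}^s[u](x) for almost every x ∈ (a,b); (ii) there exists g ∈ L^1(a,b) such that I_{a+}^{1−s}[f](x) = ∫_a^x g(t) dt for almost every x ∈ (a,b) (that is, I_{a+}^{1−s}[f] belongs to W^{1,1}(a,b) and vanishes at a). Moreover, in this case u = g almost everywhere, i.e. the representing function u is the Riemann–Liouville derivative D_{a+}^s f. -/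
/-!
Everything follows from the semigroup law `I^q (I^p g) = I^(p+q) g` (for `p + q ≥ 1` and
integrable `g`), which is Fubini on the triangle `a < r < t < x` combined with the Beta integral
`∫_r^x (t - r)^(p-1) (x - t)^(q-1) dt = B(p, q) (x - r)^(p+q-1)`, and from `I^1 u = ∫_a^x u`.
If `f = I^s u`, then `I^(1-s) f = I^1 u`. Conversely, if `I^(1-s) f = I^1 g`, then
`I^1 f = I^s I^(1-s) f = I^s I^1 g = I^1 I^s g`, and functions with equal primitives agree a.e.
by the Lebesgue differentiation theorem. The same fact gives `u = g` from
`I^1 u = I^(1-s) f = I^1 g`.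
-/
open MeasureTheory Set Filter ENNReal

open ProbabilityTheory (beta beta_pos)

theorem integral_rpow_mul_one_sub_rpow {p q : ℝ} (hp : 0 < p) (hq : 0 < q) :
    ∫ v in (0 : ℝ)..1, v ^ (p - 1) * (1 - v) ^ (q - 1) = beta p q := by
  have hreal : Complex.betaIntegral p q
      = ((∫ v in (0 : ℝ)..1, v ^ (p - 1) * (1 - v) ^ (q - 1) : ℝ) : ℂ) := by
    rw [Complex.betaIntegral, ← intervalIntegral.integral_ofReal]
    refine intervalIntegral.integral_congr fun v hv => ?_
    rw [uIcc_of_le zero_le_one] at hv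
    push_cast [Complex.ofReal_cpow hv.1, Complex.ofReal_cpow (sub_nonneg.2 hv.2)]
    rfl
  have h := Complex.betaIntegral_eq_Gamma_mul_div p q (by simpa) (by simpa)
  rw [hreal, ← Complex.ofReal_add, Complex.Gamma_ofReal, Complex.Gamma_ofReal,
    Complex.Gamma_ofReal] at h
  exact_mod_cast h

theorem setIntegral_Ioo_sub_rpow_mul_sub_rpow {p q r x : ℝ} (hp : 0 < p) (hq : 0 < q)
    (hrx : r < x) :
    ∫ t in Ioo r x, (t - r) ^ (p - 1) * (x - t) ^ (q - 1) = beta p q * (x - r) ^ (p + q - 1) := by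
  set c := x - r
  have hc : 0 < c := sub_pos.2 hrx
  have hsub := intervalIntegral.integral_comp_mul_add
    (fun t => (t - r) ^ (p - 1) * (x - t) ^ (q - 1)) hc.ne' r (a := 0) (b := 1)
  rw [mul_zero, zero_add, mul_one, sub_add_cancel] at hsub
  have hscale : ∀ v ∈ uIcc (0 : ℝ) 1, (c * v + r - r) ^ (p - 1) * (x - (c * v + r)) ^ (q - 1)
      = c ^ (p + q - 2) * (v ^ (p - 1) * (1 - v) ^ (q - 1)) := by
    intro v hv
    rw [uIcc_of_le zero_le_one] at hv
    rw [add_sub_cancel_right, show x - (c * v + r) = c * (1 - v) by ring,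
      Real.mul_rpow hc.le hv.1, Real.mul_rpow hc.le (sub_nonneg.2 hv.2),
      show p + q - 2 = (p - 1) + (q - 1) by ring, Real.rpow_add hc]
    ring
  rw [intervalIntegral.integral_congr hscale, intervalIntegral.integral_const_mul,
    integral_rpow_mul_one_sub_rpow hp hq, eq_inv_smul_iff₀ hc.ne', smul_eq_mul,
    intervalIntegral.integral_of_le hrx.le, integral_Ioc_eq_integral_Ioo] at hsub
  rw [← hsub, show p + q - 1 = (p + q - 2) + 1 by ring, Real.rpow_add_one hc.ne']
  ring

theorem integrableOn_Ioo_sub_rpow_mul_sub_rpow {p q r x : ℝ} (hp : 0 < p) (hq : 0 < q)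
    (hrx : r < x) :
    IntegrableOn (fun t => (t - r) ^ (p - 1) * (x - t) ^ (q - 1)) (Ioo r x) :=
  .of_integral_ne_zero <| by
    rw [setIntegral_Ioo_sub_rpow_mul_sub_rpow hp hq hrx]
    exact (mul_pos (beta_pos hp hq) (Real.rpow_pos_of_pos (sub_pos.2 hrx) _)).ne'

def openTriangle (a x : ℝ) : Set (ℝ × ℝ) := {w | a < w.2 ∧ w.2 < w.1 ∧ w.1 < x}

section Triangle

variable {a x : ℝ}

theorem measurableSet_openTriangle : MeasurableSet (openTriangle a x) :=
  (measurableSet_lt measurable_const measurable_snd).inter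
    ((measurableSet_lt measurable_snd measurable_fst).inter
      (measurableSet_lt measurable_fst measurable_const))

theorem indicator_openTriangle_fst {E : Type*} [Zero E] (F : ℝ × ℝ → E) (t r : ℝ) :
    (openTriangle a x).indicator F (t, r)
      = (Ioo a x).indicator (fun t => (Ioo a t).indicator (fun r => F (t, r)) r) t := by
  simp only [indicator_apply, openTriangle, mem_ofPred_eq, mem_Ioo]
  split_ifs <;> grind

theorem indicator_openTriangle_snd {E : Type*} [Zero E] (F : ℝ × ℝ → E) (t r : ℝ) :
    (openTriangle a x).indicator F (t, r)
      = (Ioo a x).indicator (fun r => (Ioo r x).indicator (fun t => F (t, r)) t) r := by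
  simp only [indicator_apply, openTriangle, mem_ofPred_eq, mem_Ioo]
  split_ifs <;> grind

theorem integral_indicator_openTriangle_fst (F : ℝ × ℝ → ℝ) (t : ℝ) :
    ∫ r, (openTriangle a x).indicator F (t, r)
      = (Ioo a x).indicator (fun t => ∫ r in Ioo a t, F (t, r)) t := by
  simp only [indicator_openTriangle_fst]
  by_cases ht : t ∈ Ioo a x
  · simp only [indicator_of_mem ht, integral_indicator measurableSet_Ioo]
  · simp only [indicator_of_notMem ht, integral_zero]

theorem integral_indicator_openTriangle_snd (F : ℝ × ℝ → ℝ) (r : ℝ) :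
    ∫ t, (openTriangle a x).indicator F (t, r)
      = (Ioo a x).indicator (fun r => ∫ t in Ioo r x, F (t, r)) r := by
  simp only [indicator_openTriangle_snd]
  by_cases hr : r ∈ Ioo a x
  · simp only [indicator_of_mem hr, integral_indicator measurableSet_Ioo]
  · simp only [indicator_of_notMem hr, integral_zero]

theorem MeasureTheory.IntegrableOn.integral_Ioo_left {F : ℝ × ℝ → ℝ}
    (hF : IntegrableOn F (openTriangle a x)) :
    IntegrableOn (fun t => ∫ r in Ioo a t, F (t, r)) (Ioo a x) := by
  rw [← integrable_indicator_iff measurableSet_Ioo]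
  have hT := (integrable_indicator_iff measurableSet_openTriangle).2 hF
  rw [Measure.volume_eq_prod] at hT
  simpa only [integral_indicator_openTriangle_fst] using hT.integral_prod_left

theorem integral_Ioo_integral_Ioo_swap {F : ℝ × ℝ → ℝ}
    (hF : IntegrableOn F (openTriangle a x)) :
    ∫ t in Ioo a x, ∫ r in Ioo a t, F (t, r) = ∫ r in Ioo a x, ∫ t in Ioo r x, F (t, r) := by
  have hT := (integrable_indicator_iff measurableSet_openTriangle).2 hF
  rw [Measure.volume_eq_prod] at hT
  have := integral_integral_swap
    (f := fun t r => (openTriangle a x).indicator F (t, r)) hT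
  simpa only [integral_indicator_openTriangle_fst, integral_indicator_openTriangle_snd,
    integral_indicator measurableSet_Ioo] using this

end Triangle

theorem integrableOn_openTriangle_rpow {p q a x : ℝ} (hp : 0 < p) (hq : 0 < q)
    (hpq : 1 ≤ p + q) {g : ℝ → ℝ} (hg : IntegrableOn g (Ioo a x)) :
    IntegrableOn (fun w : ℝ × ℝ => g w.2 * ((w.1 - w.2) ^ (p - 1) * (x - w.1) ^ (q - 1)))
      (openTriangle a x) := by
  set k : ℝ × ℝ → ℝ := fun w => (w.1 - w.2) ^ (p - 1) * (x - w.1) ^ (q - 1)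
  -- extending `g` by zero makes the integrand measurable for the product measure on `ℝ × ℝ`
  set g' := (Ioo a x).indicator g
  have hg' : Integrable g' := (integrable_indicator_iff measurableSet_Ioo).2 hg
  have hgg' : EqOn (fun w : ℝ × ℝ => g' w.2 * k w) (fun w => g w.2 * k w) (openTriangle a x) :=
    fun w hw => by
      simp only [g', indicator_of_mem (show w.2 ∈ Ioo a x from ⟨hw.1, hw.2.1.trans hw.2.2⟩)]
  refine IntegrableOn.congr_fun ?_ hgg' measurableSet_openTriangle
  have hmeas : AEStronglyMeasurable ((openTriangle a x).indicator fun w => g' w.2 * k w)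
      (volume.prod volume) :=
    ((hg'.aestronglyMeasurable.comp_snd).mul (by fun_prop : Measurable k).aestronglyMeasurable
      ).indicator measurableSet_openTriangle
  rw [← integrable_indicator_iff measurableSet_openTriangle, Measure.volume_eq_prod,
    integrable_prod_iff' hmeas]
  have hslice : ∀ r ∈ Ioo a x, IntegrableOn (fun t => g' r * k (t, r)) (Ioo r x) :=
    fun r hr => (integrableOn_Ioo_sub_rpow_mul_sub_rpow hp hq hr.2).const_mul _
  have hnorm : ∀ r ∈ Ioo a x, ∫ t in Ioo r x, ‖g' r * k (t, r)‖
      = ‖g' r‖ * (beta p q * (x - r) ^ (p + q - 1)) := fun r hr => by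
    rw [← setIntegral_Ioo_sub_rpow_mul_sub_rpow hp hq hr.2, ← integral_const_mul]
    refine setIntegral_congr_fun measurableSet_Ioo fun t ht => ?_
    have : 0 ≤ k (t, r) := mul_nonneg (Real.rpow_nonneg (by linarith [ht.1]) _)
      (Real.rpow_nonneg (by linarith [ht.2]) _)
    rw [norm_mul, Real.norm_of_nonneg this]
  constructor
  · refine ae_of_all _ fun r => ?_
    simp only [indicator_openTriangle_snd]
    by_cases hr : r ∈ Ioo a x
    · simpa only [indicator_of_mem hr, integrable_indicator_iff measurableSet_Ioo] using hslice r hr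
    · simp only [indicator_of_notMem hr]
      exact integrable_zero _ _ _
  · simp only [norm_indicator_eq_indicator_norm, integral_indicator_openTriangle_snd]
    rw [integrable_indicator_iff measurableSet_Ioo]
    refine IntegrableOn.congr_fun ?_ (fun r hr => (hnorm r hr).symm) measurableSet_Ioo
    refine hg'.norm.integrableOn.mul_continuousOn_of_subset ?_ measurableSet_Ioo isCompact_Icc
      Ioo_subset_Icc_self
    exact continuousOn_const.mul (continuousOn_const.sub continuousOn_id |>.rpow_const
      fun _ _ => Or.inr (by linarith))

theorem integral_Ioo_integral_Ioo_rpow {p q a x : ℝ} (hp : 0 < p) (hq : 0 < q)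
    (hpq : 1 ≤ p + q) {g : ℝ → ℝ} (hg : IntegrableOn g (Ioo a x)) :
    ∫ t in Ioo a x, (∫ r in Ioo a t, g r * (t - r) ^ (p - 1)) * (x - t) ^ (q - 1)
      = beta p q * ∫ r in Ioo a x, g r * (x - r) ^ (p + q - 1) := by
  calc ∫ t in Ioo a x, (∫ r in Ioo a t, g r * (t - r) ^ (p - 1)) * (x - t) ^ (q - 1)
      = ∫ t in Ioo a x, ∫ r in Ioo a t, g r * ((t - r) ^ (p - 1) * (x - t) ^ (q - 1)) := by
        simp only [← integral_mul_const, mul_assoc]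
    _ = ∫ r in Ioo a x, ∫ t in Ioo r x, g r * ((t - r) ^ (p - 1) * (x - t) ^ (q - 1)) :=
        integral_Ioo_integral_Ioo_swap (integrableOn_openTriangle_rpow hp hq hpq hg)
    _ = ∫ r in Ioo a x, beta p q * (g r * (x - r) ^ (p + q - 1)) :=
        setIntegral_congr_fun measurableSet_Ioo fun r hr => by
          rw [integral_const_mul, setIntegral_Ioo_sub_rpow_mul_sub_rpow hp hq hr.2]
          ring
    _ = beta p q * ∫ r in Ioo a x, g r * (x - r) ^ (p + q - 1) := integral_const_mul _ _

section RiemannLiouville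

variable {a b x : ℝ}

theorem RLint_eq_setIntegral (σ : ℝ) (u : ℝ → ℝ) (hax : a ≤ x) :
    RLint a σ u x = (Real.Gamma σ)⁻¹ * ∫ t in Ioo a x, u t * (x - t) ^ (σ - 1) := by
  rw [RLint, intervalIntegral.integral_of_le hax, integral_Ioc_eq_integral_Ioo]

theorem RLint_one (a : ℝ) (u : ℝ → ℝ) (x : ℝ) : RLint a 1 u x = ∫ t in a..x, u t := by
  simp [RLint]

theorem RLint_congr_ae {σ : ℝ} {u v : ℝ → ℝ} (h : u =ᵐ[volume.restrict (Ioo a b)] v)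
    (hax : a ≤ x) (hxb : x ≤ b) : RLint a σ u x = RLint a σ v x := by
  rw [RLint_eq_setIntegral σ u hax, RLint_eq_setIntegral σ v hax]
  congr 1
  refine integral_congr_ae ?_
  filter_upwards [ae_restrict_of_ae_restrict_of_subset (Ioo_subset_Ioo_right hxb) h] with t ht
  rw [ht]

theorem RLint_RLint {p q : ℝ} (hp : 0 < p) (hq : 0 < q) (hpq : 1 ≤ p + q) {g : ℝ → ℝ}
    (hg : IntegrableOn g (Ioo a x)) (hax : a ≤ x) :
    RLint a q (RLint a p g) x = RLint a (p + q) g x := by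
  rw [RLint_eq_setIntegral q _ hax, RLint_eq_setIntegral (p + q) g hax,
    setIntegral_congr_fun measurableSet_Ioo fun t ht => by
      rw [RLint_eq_setIntegral p g ht.1.le, mul_assoc],
    integral_const_mul, integral_Ioo_integral_Ioo_rpow hp hq hpq hg, beta]
  have := (Real.Gamma_pos_of_pos hp).ne'
  have := (Real.Gamma_pos_of_pos hq).ne'
  field_simp

theorem integrableOn_RLint {p : ℝ} (hp : 0 < p) {g : ℝ → ℝ} (hg : IntegrableOn g (Ioo a b)) :
    IntegrableOn (RLint a p g) (Ioo a b) := by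
  have h := (integrableOn_openTriangle_rpow hp one_pos (by linarith) hg).integral_Ioo_left
  refine IntegrableOn.congr_fun (h.const_mul (Real.Gamma p)⁻¹) (fun t ht => ?_)
    measurableSet_Ioo
  simp [RLint_eq_setIntegral p g ht.1.le]

end RiemannLiouville

theorem ae_eq_of_integral_eq {a b : ℝ} {u v : ℝ → ℝ} (hu : IntegrableOn u (Ioo a b))
    (hv : IntegrableOn v (Ioo a b))
    (h : ∀ᵐ x ∂volume.restrict (Ioo a b), ∫ t in a..x, u t = ∫ t in a..x, v t) :
    u =ᵐ[volume.restrict (Ioo a b)] v := by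
  rcases le_or_gt b a with hba | hab
  · rw [Ioo_eq_empty hba.not_gt, Measure.restrict_empty, ae_zero]
    exact eventually_bot
  set G : ℝ → ℝ := fun x => ∫ t in a..x, (u - v) t
  have huv : IntervalIntegrable (u - v) volume a b :=
    (intervalIntegrable_iff_integrableOn_Ioo_of_le hab.le).2 (hu.sub hv)
  have hIoo : Ioo a b ⊆ uIcc a b := Ioo_subset_Icc_self.trans Icc_subset_uIcc
  have hG : EqOn G 0 (Ioo a b) := by
    refine Measure.eqOn_open_of_ae_eq (μ := volume) ?_ isOpen_Ioo
      ((intervalIntegral.continuousOn_primitive_interval' huv left_mem_uIcc).mono hIoo)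
      continuousOn_const
    filter_upwards [h, ae_restrict_mem measurableSet_Ioo] with x hx hxab
    have hsub : uIcc a x ⊆ uIcc a b := uIcc_subset_uIcc_left (hIoo hxab)
    rw [← sub_eq_zero, ← intervalIntegral.integral_sub] at hx
    exacts [hx, ((intervalIntegrable_iff_integrableOn_Ioo_of_le hab.le).2 hu).mono_set hsub,
      ((intervalIntegrable_iff_integrableOn_Ioo_of_le hab.le).2 hv).mono_set hsub]
  filter_upwards [ae_restrict_of_ae huv.ae_hasDerivAt_integral,
    ae_restrict_mem measurableSet_Ioo] with x hx hxab
  have hG' : HasDerivAt G 0 x := (hasDerivAt_const x 0).congr_of_eventuallyEq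
    (hG.eventuallyEq_of_mem (isOpen_Ioo.mem_nhds hxab))
  exact sub_eq_zero.1 ((hx (hIoo hxab) a left_mem_uIcc).unique hG')

theorem rl_L1_representability_general (a b s : ℝ) (hs : s ∈ Set.Ioo (0:ℝ) 1)
    (f : ℝ → ℝ) (hf : IntegrableOn f (Set.Ioo a b)) :
    ((∃ u : ℝ → ℝ, IntegrableOn u (Set.Ioo a b) ∧
        ∀ᵐ x ∂(volume.restrict (Set.Ioo a b)), f x = RLint a s u x) ↔
      (∃ g : ℝ → ℝ, IntegrableOn g (Set.Ioo a b) ∧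
        ∀ᵐ x ∂(volume.restrict (Set.Ioo a b)),
          RLint a (1 - s) f x = ∫ t in a..x, g t)) ∧
    (∀ u g : ℝ → ℝ, IntegrableOn u (Set.Ioo a b) → IntegrableOn g (Set.Ioo a b) →
      (∀ᵐ x ∂(volume.restrict (Set.Ioo a b)), f x = RLint a s u x) →
      (∀ᵐ x ∂(volume.restrict (Set.Ioo a b)), RLint a (1 - s) f x = ∫ t in a..x, g t) →
      u =ᵐ[volume.restrict (Set.Ioo a b)] g) := by
  obtain ⟨hs₀, hs₁⟩ := hs
  have hIoo : ∀ {x}, x ∈ Ioo a b → Ioo a x ⊆ Ioo a b :=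
    fun hx => Ioo_subset_Ioo_right hx.2.le
  have forward : ∀ u, IntegrableOn u (Ioo a b) → (∀ᵐ x ∂volume.restrict (Ioo a b),
      f x = RLint a s u x) → ∀ᵐ x ∂volume.restrict (Ioo a b),
        RLint a (1 - s) f x = ∫ t in a..x, u t := fun u hu hfu => by
    filter_upwards [ae_restrict_mem measurableSet_Ioo] with x hx
    rw [RLint_congr_ae hfu hx.1.le hx.2.le, RLint_RLint hs₀ (by linarith) (by linarith)
      (hu.mono_set (hIoo hx)) hx.1.le, add_sub_cancel, RLint_one]
  refine ⟨⟨fun ⟨u, hu, hfu⟩ => ⟨u, hu, forward u hu hfu⟩, fun ⟨g, hg, hfg⟩ => ⟨g, hg, ?_⟩⟩,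
    fun u g hu hg hfu hfg => ae_eq_of_integral_eq hu hg ?_⟩
  · have hfg' : RLint a (1 - s) f =ᵐ[volume.restrict (Ioo a b)] RLint a 1 g :=
      hfg.mono fun x hx => hx.trans (RLint_one a g x).symm
    refine ae_eq_of_integral_eq hf (integrableOn_RLint hs₀ hg) ?_
    filter_upwards [ae_restrict_mem measurableSet_Ioo] with x hx
    have hgx := hg.mono_set (hIoo hx)
    calc ∫ t in a..x, f t = RLint a s (RLint a (1 - s) f) x := by
          rw [RLint_RLint (by linarith) hs₀ (by linarith) (hf.mono_set (hIoo hx)) hx.1.le,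
            sub_add_cancel, RLint_one]
      _ = RLint a s (RLint a 1 g) x := RLint_congr_ae hfg' hx.1.le hx.2.le
      _ = RLint a 1 (RLint a s g) x := by
          rw [RLint_RLint one_pos hs₀ (by linarith) hgx hx.1.le,
            RLint_RLint hs₀ one_pos (by linarith) hgx hx.1.le, add_comm]
      _ = ∫ t in a..x, RLint a s g t := RLint_one _ _ _
  · filter_upwards [forward u hu hfu, hfg] with x hu hg
    rw [← hu, hg]

/-- `f ∈ L^1(a,b)` is representable as `I_{a+}^s[u]` with `u ∈ L^1`
iff `I_{a+}^{1-s}[f]` is in `W^{1,1}(a,b)` and vanishes at `a`; moreover the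
representing function is the Riemann–Liouville derivative. -/
theorem rl_L1_representability (a b s : ℝ) (hab : a < b) (hs : s ∈ Set.Ioo (0:ℝ) 1)
    (f : ℝ → ℝ) (hf : IntegrableOn f (Set.Ioo a b)) :
    ((∃ u : ℝ → ℝ, IntegrableOn u (Set.Ioo a b) ∧
        ∀ᵐ x ∂(volume.restrict (Set.Ioo a b)), f x = RLint a s u x) ↔
      (∃ g : ℝ → ℝ, IntegrableOn g (Set.Ioo a b) ∧
        ∀ᵐ x ∂(volume.restrict (Set.Ioo a b)),
          RLint a (1 - s) f x = ∫ t in a..x, g t)) ∧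
    (∀ u g : ℝ → ℝ, IntegrableOn u (Set.Ioo a b) → IntegrableOn g (Set.Ioo a b) →
      (∀ᵐ x ∂(volume.restrict (Set.Ioo a b)), f x = RLint a s u x) →
      (∀ᵐ x ∂(volume.restrict (Set.Ioo a b)), RLint a (1 - s) f x = ∫ t in a..x, g t) →
      u =ᵐ[volume.restrict (Set.Ioo a b)] g) :=
  rl_L1_representability_general a b s hs f hf
end
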